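/- arXiv:1712.10261 — 2 statements merged into one kernel-verified Lean document; each statement's English description precedes it below -/
import Mathlib

section
/- Let M be any real n×n matrix, let m ≥ 2, and let y₁,…,y_n be unit vectors in ℝ^m. Then there exists x ∈ {−1,1}^n such that Σ_{i,j=1}^n M_{ij}·x_i·x_j ≥ (2/π)·Σ_{i,j=1}^n M_{ij}·arcsin(⟨y_i, y_j⟩). -/
open scoped RealInnerProductSpace

/-!
For a standard Gaussian vector `w` and unit vectors `u, v`, the signs of `⟪u, w⟫` and `⟪v, w⟫`
differ exactly when the random hyperplane `w^⊥` separates `u` and `v`, which happens with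
probability `arccos ⟪u, v⟫ / π`; hence `𝔼[sgn ⟪u, w⟫ sgn ⟪v, w⟫] = (2 / π) arcsin ⟪u, v⟫`.
The two relevant coordinates of `w` are independent standard Gaussians, so this is a planar
integral, computed in polar coordinates. By linearity, the rounding `x i = sgn ⟪y i, w⟫` has
expected value `(2 / π) ∑ M i j arcsin ⟪y i, y j⟫`, so some `w` does at least as well.
-/

open Real MeasureTheory ProbabilityTheory Set Module

/-- `Real.sign` vanishes at `0`; rounding needs a value in `{-1, 1}` everywhere. -/
noncomputable def pmSign (t : ℝ) : ℝ := if 0 ≤ t then 1 else -1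

lemma pmSign_of_nonneg {t : ℝ} (h : 0 ≤ t) : pmSign t = 1 := if_pos h

lemma pmSign_of_neg {t : ℝ} (h : t < 0) : pmSign t = -1 := if_neg h.not_ge

lemma pmSign_eq_one_or_eq_neg_one (t : ℝ) : pmSign t = 1 ∨ pmSign t = -1 := by
  unfold pmSign; split_ifs <;> simp

lemma abs_pmSign (t : ℝ) : |pmSign t| = 1 := by
  rcases pmSign_eq_one_or_eq_neg_one t with h | h <;> simp [h]

@[fun_prop]
lemma measurable_pmSign : Measurable pmSign :=
  Measurable.ite measurableSet_Ici measurable_const measurable_const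

lemma pmSign_mul_of_pos {r : ℝ} (hr : 0 < r) (t : ℝ) : pmSign (r * t) = pmSign t := by
  simp only [pmSign, mul_nonneg_iff_of_pos_left hr]

lemma intervalIntegral_eq_of_eqOn_Ioo {f : ℝ → ℝ} {a b C : ℝ} (hab : a ≤ b)
    (hf : EqOn f (fun _ => C) (Ioo a b)) : ∫ θ in a..b, f θ = C * (b - a) := by
  rw [intervalIntegral.integral_of_le hab, integral_Ioc_eq_integral_Ioo,
    setIntegral_congr_fun measurableSet_Ioo hf, setIntegral_const, volume_real_Ioo_of_le hab,
    smul_eq_mul, mul_comm]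

lemma pmSign_cos_of_mem_Icc {θ : ℝ} (h : θ ∈ Icc (-(π / 2)) (π / 2)) : pmSign (cos θ) = 1 :=
  pmSign_of_nonneg (cos_nonneg_of_mem_Icc h)

lemma pmSign_cos_of_mem_Ioo {θ : ℝ} (h : θ ∈ Ioo (π / 2) (π + π / 2)) : pmSign (cos θ) = -1 :=
  pmSign_of_neg (cos_neg_of_pi_div_two_lt_of_lt h.1 h.2)

lemma intervalIntegrable_pmSign_cos_mul (φ a b : ℝ) :
    IntervalIntegrable (fun θ => pmSign (cos θ) * pmSign (cos (θ - φ))) volume a b :=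
  (intervalIntegrable_const (c := (1 : ℝ))).mono_fun (by fun_prop)
    (.of_forall fun θ => by simp [abs_pmSign])

/-- Over the period `[-π/2, 3π/2]` the integrand is `-1, 1, -1, 1` on four arcs of
lengths `φ, π - φ, φ, π - φ`. -/
lemma integral_pmSign_cos_mul_pmSign_cos_sub {φ : ℝ} (h0 : 0 ≤ φ) (hπ : φ ≤ π) :
    ∫ θ in -π..π, pmSign (cos θ) * pmSign (cos (θ - φ)) = 2 * π - 4 * φ := by
  set f := fun θ => pmSign (cos θ) * pmSign (cos (θ - φ))
  have hper : Function.Periodic f (2 * π) := fun θ => by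
    simp only [f, add_sub_right_comm, cos_add_two_pi]
  have hint := intervalIntegrable_pmSign_cos_mul φ
  have hπ0 := pi_pos
  calc ∫ θ in -π..π, f θ = ∫ θ in -(π / 2)..-(π / 2) + 2 * π, f θ := by
        rw [← hper.intervalIntegral_add_eq (-π)]; ring_nf
    _ = (-1) * φ + 1 * (π - φ) + (-1) * φ + 1 * (π - φ) := by
        rw [← intervalIntegral.integral_add_adjacent_intervals (b := φ - π / 2)
            (hint _ _) (hint _ _),
          ← intervalIntegral.integral_add_adjacent_intervals (a := φ - π / 2) (b := π / 2)
            (hint _ _) (hint _ _),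
          ← intervalIntegral.integral_add_adjacent_intervals (a := π / 2) (b := φ + π / 2)
            (hint _ _) (hint _ _)]
        rw [intervalIntegral_eq_of_eqOn_Ioo (C := -1) (by linarith) fun θ ⟨h1, h2⟩ => by
              rw [← cos_add_two_pi (θ - φ)]
              simp only [pmSign_cos_of_mem_Icc (θ := θ) ⟨by linarith, by linarith⟩,
                pmSign_cos_of_mem_Ioo (θ := θ - φ + 2 * π) ⟨by linarith, by linarith⟩]; norm_num,
          intervalIntegral_eq_of_eqOn_Ioo (C := 1) (by linarith) fun θ ⟨h1, h2⟩ => by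
              simp only [pmSign_cos_of_mem_Icc (θ := θ) ⟨by linarith, by linarith⟩,
                pmSign_cos_of_mem_Icc (θ := θ - φ) ⟨by linarith, by linarith⟩]; norm_num,
          intervalIntegral_eq_of_eqOn_Ioo (C := -1) (by linarith) fun θ ⟨h1, h2⟩ => by
              simp only [pmSign_cos_of_mem_Ioo (θ := θ) ⟨by linarith, by linarith⟩,
                pmSign_cos_of_mem_Icc (θ := θ - φ) ⟨by linarith, by linarith⟩]; norm_num,
          intervalIntegral_eq_of_eqOn_Ioo (C := 1) (by linarith) fun θ ⟨h1, h2⟩ => by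
              simp only [pmSign_cos_of_mem_Ioo (θ := θ) ⟨by linarith, by linarith⟩,
                pmSign_cos_of_mem_Ioo (θ := θ - φ) ⟨by linarith, by linarith⟩]; norm_num]
        ring
    _ = 2 * π - 4 * φ := by ring

lemma integral_Ioi_mul_exp_neg_sq_div_two : ∫ r in Ioi (0 : ℝ), r * exp (-(r ^ 2 / 2)) = 1 := by
  have h := integral_mul_cexp_neg_mul_sq (b := 1 / 2) (by norm_num)
  norm_num at h
  rw [← Complex.ofReal_inj, ← integral_complex_ofReal, Complex.ofReal_one, ← h]
  congr with r
  push_cast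
  ring_nf

/-- In polar coordinates `p = (r cos θ, r sin θ)` the integrand factors as
`r e^{-r²/2} · pmSign (cos θ) pmSign (cos (θ - φ))`. -/
lemma integral_pmSign_mul_pmSign_rotate_mul_exp {φ : ℝ} (h0 : 0 ≤ φ) (hπ : φ ≤ π) :
    ∫ p : ℝ × ℝ, pmSign p.1 * pmSign (cos φ * p.1 + sin φ * p.2) *
      exp (-((p.1 ^ 2 + p.2 ^ 2) / 2)) = 2 * π - 4 * φ := by
  rw [← integral_comp_polarCoord_symm]
  have htarget : polarCoord.target = Ioi (0 : ℝ) ×ˢ Ioo (-π) π := rfl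
  have hpolar : EqOn
      (fun p : ℝ × ℝ => p.1 • (pmSign (polarCoord.symm p).1 *
        pmSign (cos φ * (polarCoord.symm p).1 + sin φ * (polarCoord.symm p).2) *
        exp (-(((polarCoord.symm p).1 ^ 2 + (polarCoord.symm p).2 ^ 2) / 2))))
      (fun p => p.1 * exp (-(p.1 ^ 2 / 2)) * (pmSign (cos p.2) * pmSign (cos (p.2 - φ))))
      polarCoord.target := by
    rintro ⟨r, θ⟩ ⟨hr, -⟩
    have hrot : cos φ * (r * cos θ) + sin φ * (r * sin θ) = r * cos (θ - φ) := by
      rw [cos_sub]; ring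
    have hnorm : (r * cos θ) ^ 2 + (r * sin θ) ^ 2 = r ^ 2 := by
      linear_combination r ^ 2 * cos_sq_add_sin_sq θ
    simp only [polarCoord_symm_apply, hrot, hnorm, pmSign_mul_of_pos (mem_Ioi.1 hr), smul_eq_mul]
    ring
  rw [setIntegral_congr_fun polarCoord.open_target.measurableSet hpolar, htarget,
    Measure.volume_eq_prod, setIntegral_prod_mul (fun r => r * exp (-(r ^ 2 / 2)))
      (fun θ => pmSign (cos θ) * pmSign (cos (θ - φ))),
    integral_Ioi_mul_exp_neg_sq_div_two, one_mul,
    ← integral_Ioc_eq_integral_Ioo, ← intervalIntegral.integral_of_le (by linarith [pi_pos]),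
    integral_pmSign_cos_mul_pmSign_cos_sub h0 hπ]

lemma integral_gaussianReal_prod (f : ℝ × ℝ → ℝ) :
    ∫ p, f p ∂(gaussianReal 0 1).prod (gaussianReal 0 1) =
      (2 * π)⁻¹ * ∫ p : ℝ × ℝ, f p * exp (-((p.1 ^ 2 + p.2 ^ 2) / 2)) := by
  rw [gaussianReal_of_var_ne_zero 0 one_ne_zero, prod_withDensity (measurable_gaussianPDF 0 1)
    (measurable_gaussianPDF 0 1), ← Measure.volume_eq_prod,
    integral_withDensity_eq_integral_toReal_smul (by fun_prop)
      (.of_forall fun _ => ENNReal.mul_lt_top gaussianPDF_lt_top gaussianPDF_lt_top),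
    ← integral_const_mul]
  congr with p
  rw [ENNReal.toReal_mul, toReal_gaussianPDF, toReal_gaussianPDF, gaussianPDFReal,
    gaussianPDFReal, smul_eq_mul]
  have hnorm : (√(2 * π))⁻¹ * (√(2 * π))⁻¹ = (2 * π)⁻¹ := by
    rw [← mul_inv, mul_self_sqrt (by positivity)]
  have hexp : exp (-p.1 ^ 2 / 2) * exp (-p.2 ^ 2 / 2) = exp (-((p.1 ^ 2 + p.2 ^ 2) / 2)) := by
    rw [← exp_add]; ring_nf
  simp only [NNReal.coe_one, mul_one, sub_zero]
  rw [← hnorm, ← hexp]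
  ring

lemma integral_pmSign_mul_pmSign_gaussianReal_prod {c : ℝ} (hc : c ∈ Icc (-1) 1) :
    ∫ p, pmSign p.1 * pmSign (c * p.1 + √(1 - c ^ 2) * p.2)
      ∂(gaussianReal 0 1).prod (gaussianReal 0 1) = 2 / π * arcsin c := by
  have h := integral_pmSign_mul_pmSign_rotate_mul_exp (arccos_nonneg c) (arccos_le_pi c)
  rw [cos_arccos hc.1 hc.2, sin_arccos] at h
  rw [integral_gaussianReal_prod, h, arccos_eq_pi_div_two_sub_arcsin]
  field_simp
  ring

lemma MeasureTheory.Measure.pi_map_eval_prodMk {ι : Type*} [Fintype ι] {X : ι → Type*}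
    [∀ i, MeasurableSpace (X i)] {μ : (i : ι) → Measure (X i)} [∀ i, IsProbabilityMeasure (μ i)]
    {i j : ι} (hij : i ≠ j) :
    (Measure.pi μ).map (fun x => (x i, x j)) = (μ i).prod (μ j) := by
  have hind : IndepFun (fun x : (∀ k, X k) => x i) (fun x => x j) (Measure.pi μ) :=
    (iIndepFun_pi (X := fun k (ω : X k) => ω) fun k => aemeasurable_id).indepFun hij
  rw [hind.map_prod_eq_prod_map_map (measurable_pi_apply i).aemeasurable
      (measurable_pi_apply j).aemeasurable,
    (measurePreserving_eval μ i).map_eq, (measurePreserving_eval μ j).map_eq]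

lemma integrable_pmSign_mul_pmSign {α : Type*} [MeasurableSpace α] {μ : Measure α}
    [IsFiniteMeasure μ] {f g : α → ℝ} (hf : Measurable f) (hg : Measurable g) :
    Integrable (fun a => pmSign (f a) * pmSign (g a)) μ :=
  .of_bound (by fun_prop) 1 (.of_forall fun a => by simp [abs_pmSign])

section InnerProductSpace

variable {E : Type*} [NormedAddCommGroup E] [InnerProductSpace ℝ E] [FiniteDimensional ℝ E]

lemma exists_norm_eq_one_inner_eq_zero (hE : 2 ≤ finrank ℝ E) (u : E) :
    ∃ e : E, ‖e‖ = 1 ∧ ⟪u, e⟫ = 0 := by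
  have hK : (ℝ ∙ u)ᗮ ≠ ⊥ := by
    rw [← Submodule.one_le_finrank_iff]
    have := (ℝ ∙ u).finrank_add_finrank_orthogonal
    have := finrank_span_le_card (R := ℝ) ({u} : Set E)
    simp only [Set.toFinset_singleton, Finset.card_singleton] at this
    omega
  obtain ⟨e, he, he0⟩ := Submodule.exists_mem_ne_zero_of_ne_bot hK
  refine ⟨‖e‖⁻¹ • e, norm_smul_inv_norm he0, ?_⟩
  rw [real_inner_smul_right, Submodule.mem_orthogonal_singleton_iff_inner_right.1 he, mul_zero]

lemma exists_orthonormal_pair_decomposition (hE : 2 ≤ finrank ℝ E) {u v : E} (hu : ‖u‖ = 1)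
    (hv : ‖v‖ = 1) : ∃ e : E, Orthonormal ℝ ![u, e] ∧ v = ⟪u, v⟫ • u + √(1 - ⟪u, v⟫ ^ 2) • e := by
  set d := v - ⟪u, v⟫ • u
  have hud : ⟪u, d⟫ = 0 := by
    rw [inner_sub_right, real_inner_smul_right, real_inner_self_eq_norm_sq, hu]; ring
  have hd : ‖d‖ = √(1 - ⟪u, v⟫ ^ 2) := by
    rw [← sqrt_sq (norm_nonneg d), ← real_inner_self_eq_norm_sq]
    congr 1
    rw [inner_sub_left, real_inner_smul_left, hud, mul_zero, sub_zero, inner_sub_right,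
      real_inner_smul_right, real_inner_self_eq_norm_sq, hv, real_inner_comm]; ring
  obtain ⟨e, he, hue, hde⟩ : ∃ e : E, ‖e‖ = 1 ∧ ⟪u, e⟫ = 0 ∧ d = ‖d‖ • e := by
    by_cases hd0 : d = 0
    · obtain ⟨e, he, hue⟩ := exists_norm_eq_one_inner_eq_zero hE u
      exact ⟨e, he, hue, by simp [hd0]⟩
    · refine ⟨‖d‖⁻¹ • d, norm_smul_inv_norm hd0, by rw [real_inner_smul_right, hud, mul_zero], ?_⟩
      rw [smul_inv_smul₀ (norm_ne_zero_iff.2 hd0)]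
  refine ⟨e, ?_, ?_⟩
  · rw [orthonormal_iff_ite]
    intro i j
    fin_cases i <;> fin_cases j <;> simp [hu, he, hue, real_inner_comm u e]
  · rw [← hd, ← hde, add_sub_cancel]

variable [MeasurableSpace E] [BorelSpace E]

/-- Extend `e₀, e₁` to an orthonormal basis, in whose coordinates `stdGaussian E` is a product
of standard Gaussians. -/
lemma stdGaussian_map_inner_prodMk {e₀ e₁ : E} (he : Orthonormal ℝ ![e₀, e₁]) :
    (stdGaussian E).map (fun w => (⟪e₀, w⟫, ⟪e₁, w⟫)) =
      (gaussianReal 0 1).prod (gaussianReal 0 1) := by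
  have hinj := he.linearIndependent.injective
  obtain ⟨s, b, hsub, hb⟩ :=
    ((orthonormal_subtype_range hinj).2 he).exists_orthonormalBasis_extension
  let i : s := ⟨e₀, hsub ⟨0, rfl⟩⟩
  let j : s := ⟨e₁, hsub ⟨1, rfl⟩⟩
  have hij : i ≠ j := fun h => zero_ne_one (hinj (congrArg Subtype.val h))
  have hcoord : (fun w => (⟪e₀, w⟫, ⟪e₁, w⟫)) ∘ (fun x : s → ℝ => ∑ k, x k • b k) =
      fun x => (x i, x j) := by
    have hbi : b i = e₀ := congrFun hb i
    have hbj : b j = e₁ := congrFun hb j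
    ext x
    · simp only [Function.comp_apply, ← hbi, b.orthonormal.inner_right_fintype]
    · simp only [Function.comp_apply, ← hbj, b.orthonormal.inner_right_fintype]
  rw [stdGaussian_eq_map_pi_orthonormalBasis b, Measure.map_map (by fun_prop) (by fun_prop),
    hcoord, Measure.pi_map_eval_prodMk hij]

theorem integral_pmSign_inner_mul_pmSign_inner_stdGaussian (hE : 2 ≤ finrank ℝ E) {u v : E}
    (hu : ‖u‖ = 1) (hv : ‖v‖ = 1) :
    ∫ w, pmSign ⟪u, w⟫ * pmSign ⟪v, w⟫ ∂stdGaussian E = 2 / π * arcsin ⟪u, v⟫ := by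
  obtain ⟨e, he, hv_eq⟩ := exists_orthonormal_pair_decomposition hE hu hv
  have hc : ⟪u, v⟫ ∈ Icc (-1) 1 := by
    rw [mem_Icc, ← abs_le]; simpa [hu, hv] using abs_real_inner_le_norm u v
  set c := ⟪u, v⟫
  have hinner : ∀ w, ⟪v, w⟫ = c * ⟪u, w⟫ + √(1 - c ^ 2) * ⟪e, w⟫ := fun w => by
    rw [hv_eq, inner_add_left, real_inner_smul_left, real_inner_smul_left]
  simp_rw [hinner]
  rw [← integral_pmSign_mul_pmSign_gaussianReal_prod hc, ← stdGaussian_map_inner_prodMk he,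
    integral_map (by fun_prop) (by fun_prop)]

theorem exists_sign_vector_arcsin_le {ι : Type*} [Fintype ι] (hE : 2 ≤ finrank ℝ E)
    (M : Matrix ι ι ℝ) (y : ι → E) (hy : ∀ i, ‖y i‖ = 1) :
    ∃ x : ι → ℝ, (∀ i, x i = 1 ∨ x i = -1) ∧
      2 / π * ∑ i, ∑ j, M i j * arcsin ⟪y i, y j⟫ ≤ ∑ i, ∑ j, M i j * x i * x j := by
  have hterm : ∀ i j, Integrable (fun w => M i j * (pmSign ⟪y i, w⟫ * pmSign ⟪y j, w⟫))
      (stdGaussian E) := fun i j =>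
    (integrable_pmSign_mul_pmSign (by fun_prop) (by fun_prop)).const_mul (M i j)
  have hmean : ∫ w, ∑ i, ∑ j, M i j * (pmSign ⟪y i, w⟫ * pmSign ⟪y j, w⟫) ∂stdGaussian E =
      2 / π * ∑ i, ∑ j, M i j * arcsin ⟪y i, y j⟫ := by
    rw [integral_finsetSum _ fun i _ => integrable_finsetSum _ fun j _ => hterm i j]
    simp_rw [integral_finsetSum _ fun j _ => hterm _ j, integral_const_mul,
      integral_pmSign_inner_mul_pmSign_inner_stdGaussian hE (hy _) (hy _), Finset.mul_sum]
    exact Finset.sum_congr rfl fun i _ => Finset.sum_congr rfl fun j _ => by ring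
  have hint : Integrable (fun w => ∑ i, ∑ j, M i j * (pmSign ⟪y i, w⟫ * pmSign ⟪y j, w⟫))
      (stdGaussian E) :=
    integrable_finsetSum _ fun i _ => integrable_finsetSum _ fun j _ => hterm i j
  obtain ⟨w, hw⟩ := exists_integral_le hint
  refine ⟨fun i => pmSign ⟪y i, w⟫, fun i => pmSign_eq_one_or_eq_neg_one _, ?_⟩
  simpa only [hmean, mul_assoc] using hw

end InnerProductSpace

/-- **Goemans–Williamson hyperplane rounding.** For any real `n×n` matrix `M` and unit
vectors `y₁,…,y_n ∈ ℝᵐ` (`m ≥ 2`), there are signs `x ∈ {-1,1}ⁿ` with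
`Σ M_ij x_i x_j ≥ (2/π) Σ M_ij arcsin⟨y_i,y_j⟩`. -/
theorem hyperplane_rounding (n m : ℕ) (hm : 2 ≤ m) (M : Matrix (Fin n) (Fin n) ℝ)
    (y : Fin n → EuclideanSpace ℝ (Fin m)) (hy : ∀ i, ‖y i‖ = 1) :
    ∃ x : Fin n → ℝ, (∀ i, x i = 1 ∨ x i = -1) ∧
      (2 / Real.pi) * ∑ i, ∑ j, M i j * Real.arcsin ⟪y i, y j⟫ ≤
        ∑ i, ∑ j, M i j * x i * x j :=
  exists_sign_vector_arcsin_le (by simpa using hm) M y hy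
end

section
/- Let n ≥ 2 be even, d ≥ 1, 0 < ε ≤ 1/3, fix a bipartition of {1,…,n} into two sets of size n/2, and let f : {−1,1}^n → ℝ be any function. Then the number of simple d-regular bipartite graphs G on {1,…,n} with the fixed bipartition such that (1−ε)·xᵀL_G x ≤ f(x) ≤ (1+ε)·xᵀL_G x for all x ∈ {−1,1}^n is at most 2^(dn/2 + 9·d^(3/2)·ε·n·log₂ n). -/
open Matrix

/-- The Laplacian quadratic form `xᵀ L_G x` of a simple graph `G` on vertex set `Fin n`. -/
noncomputable def lapQuadForm {n : ℕ} (G : SimpleGraph (Fin n)) (x : Fin n → ℝ) : ℝ :=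
  letI := Classical.decRel G.Adj
  x ⬝ᵥ (G.lapMatrix ℝ *ᵥ x)

/-- `G` is `d`-regular: every vertex has degree `d`. -/
def IsRegOfDeg {n : ℕ} (G : SimpleGraph (Fin n)) (d : ℕ) : Prop :=
  letI := Classical.decRel G.Adj
  G.IsRegularOfDegree d

/-- `G` is bipartite with bipartition `L ∪ Lᶜ`: every edge has one endpoint in `L` and one
outside `L`. -/
def IsBipartiteWith {n : ℕ} (G : SimpleGraph (Fin n)) (L : Set (Fin n)) : Prop :=
  ∀ u v, G.Adj u v → (u ∈ L ↔ v ∉ L)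

/-!
Fix one graph `G₀` of the family. If `f` is an `ε`-cut sketch of both `G₀` and `H`, then
`|xᵀ(L_{G₀} - L_H)x| ≤ ε·xᵀ(L_{G₀} + L_H)x`; flipping the signs of `x` on one side of the
bipartition turns `xᵀL x` into `2dn - xᵀL x` for both graphs, so `|xᵀ(A_{G₀} - A_H)x| ≤ 2εdn`
for every sign vector `x`. Taking `x` on `L` to be the signs of `(A_{G₀} - A_H)y` gives
`∑_{u ∈ L} |((A_{G₀} - A_H)y)_u| ≤ εdn` for every sign vector `y`. Averaging over `y` with
Khintchine's inequality `E|∑ a_v y_v| ≥ ‖a‖₂/√3` (from the second and fourth moments), and using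
that each row of `A_{G₀} - A_H` has at most `2d` nonzero entries, shows that `G₀ ∆ H` has at most
`√6·ε·d^{3/2}·n` edges. As `H ↦ G₀ ∆ H` is injective, there are at most
`(n²)^{√6·ε·d^{3/2}·n} ≤ 2^{6·ε·d^{3/2}·n·log₂ n}` graphs in the family.
-/

open Finset SimpleGraph
open scoped symmDiff

lemma sum_sq_pow_three_le {α : Type*} (s : Finset α) {f : α → ℝ} (hf : ∀ i ∈ s, 0 ≤ f i) :
    (∑ i ∈ s, f i ^ 2) ^ 3 ≤ (∑ i ∈ s, f i) ^ 2 * ∑ i ∈ s, f i ^ 4 := by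
  have h13 : (∑ i ∈ s, f i ^ 2) ^ 2 ≤ (∑ i ∈ s, f i) * ∑ i ∈ s, f i ^ 3 :=
    sum_sq_le_sum_mul_sum_of_sq_le_mul s hf (fun i hi => pow_nonneg (hf i hi) 3)
      fun i _ => le_of_eq (by ring)
  have h24 : (∑ i ∈ s, f i ^ 3) ^ 2 ≤ (∑ i ∈ s, f i ^ 2) * ∑ i ∈ s, f i ^ 4 :=
    sum_sq_le_sum_mul_sum_of_sq_le_mul s (fun i _ => sq_nonneg _)
      (fun i hi => pow_nonneg (hf i hi) 4) fun i _ => le_of_eq (by ring)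
  have h2 : 0 ≤ ∑ i ∈ s, f i ^ 2 := sum_nonneg fun i _ => sq_nonneg _
  rcases h2.eq_or_lt with h0 | hpos
  · rw [← h0, zero_pow three_ne_zero]
    exact mul_nonneg (sq_nonneg _) (sum_nonneg fun i _ => by positivity)
  refine le_of_mul_le_mul_left ?_ hpos
  calc (∑ i ∈ s, f i ^ 2) * (∑ i ∈ s, f i ^ 2) ^ 3 = ((∑ i ∈ s, f i ^ 2) ^ 2) ^ 2 := by ring
    _ ≤ ((∑ i ∈ s, f i) * ∑ i ∈ s, f i ^ 3) ^ 2 := pow_le_pow_left₀ (sq_nonneg _) h13 2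
    _ = (∑ i ∈ s, f i) ^ 2 * (∑ i ∈ s, f i ^ 3) ^ 2 := by ring
    _ ≤ (∑ i ∈ s, f i) ^ 2 * ((∑ i ∈ s, f i ^ 2) * ∑ i ∈ s, f i ^ 4) := by gcongr
    _ = _ := by ring

section Khintchine

variable {ι : Type*}

def signVec (y : ι → Bool) : ι → ℝ := fun v => if y v then 1 else -1

lemma signVec_eq_one_or_neg_one (y : ι → Bool) (v : ι) :
    signVec y v = 1 ∨ signVec y v = -1 := by
  unfold signVec; split_ifs <;> simp

lemma signVec_sq (y : ι → Bool) (v : ι) : signVec y v ^ 2 = 1 := by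
  rcases signVec_eq_one_or_neg_one y v with h | h <;> simp [h]

def rademacherSum (a : ι → ℝ) (s : Finset ι) (y : ι → Bool) : ℝ :=
  ∑ v ∈ s, a v * signVec y v

lemma rademacherSum_insert [DecidableEq ι] {s : Finset ι} {v : ι} (hv : v ∉ s) (a : ι → ℝ)
    (y : ι → Bool) : rademacherSum a (insert v s) y = a v * signVec y v + rademacherSum a s y := by
  rw [rademacherSum, sum_insert hv, rademacherSum]

variable [Fintype ι] [DecidableEq ι]

lemma sum_signVec_mul_eq_zero (v : ι) {F : (ι → Bool) → ℝ}
    (hF : ∀ y b, F (Function.update y v b) = F y) :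
    ∑ y, signVec y v * F y = 0 := by
  refine Finset.sum_involution (fun y _ => Function.update y v (!y v)) (fun y _ => ?_)
    (fun y _ _ h => ?_) (fun _ _ => mem_univ _) (fun y _ => ?_)
  · rw [hF]; cases h : y v <;> simp [signVec, h]
  · simpa using congr_fun h v
  · simp

lemma sum_signVec_mul_rademacherSum_pow {s : Finset ι} {v : ι} (hv : v ∉ s) (a : ι → ℝ)
    (k : ℕ) :
    ∑ y, signVec y v * rademacherSum a s y ^ k = 0 := by
  refine sum_signVec_mul_eq_zero v fun y b => ?_
  congr 1
  refine sum_congr rfl fun w hw => ?_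
  rw [signVec, signVec, Function.update_of_ne (ne_of_mem_of_not_mem hw hv)]

lemma sum_rademacherSum_sq (a : ι → ℝ) (s : Finset ι) :
    ∑ y, rademacherSum a s y ^ 2 = 2 ^ Fintype.card ι * ∑ v ∈ s, a v ^ 2 := by
  induction s using Finset.induction_on with
  | empty => simp [rademacherSum]
  | insert v s hv ih =>
    have hexp : ∀ y, rademacherSum a (insert v s) y ^ 2 = a v ^ 2
        + 2 * a v * (signVec y v * rademacherSum a s y ^ 1) + rademacherSum a s y ^ 2 := by
      intro y
      rw [rademacherSum_insert hv]
      linear_combination a v ^ 2 * signVec_sq y v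
    simp only [hexp, sum_add_distrib, ← mul_sum, sum_signVec_mul_rademacherSum_pow hv, ih,
      sum_const, card_univ, Fintype.card_fun, Fintype.card_bool, sum_insert hv]
    simp only [nsmul_eq_mul, Nat.cast_pow, Nat.cast_ofNat, mul_zero, add_zero]
    ring

lemma sum_rademacherSum_pow_four_le (a : ι → ℝ) (s : Finset ι) :
    ∑ y, rademacherSum a s y ^ 4 ≤ 3 * 2 ^ Fintype.card ι * (∑ v ∈ s, a v ^ 2) ^ 2 := by
  induction s using Finset.induction_on with
  | empty => simp [rademacherSum]
  | insert v s hv ih =>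
    have hexp : ∀ y, rademacherSum a (insert v s) y ^ 4 = a v ^ 4
        + 4 * a v ^ 3 * (signVec y v * rademacherSum a s y ^ 1)
        + 6 * a v ^ 2 * rademacherSum a s y ^ 2
        + 4 * a v * (signVec y v * rademacherSum a s y ^ 3) + rademacherSum a s y ^ 4 := by
      intro y
      rw [rademacherSum_insert hv]
      linear_combination (a v ^ 4 * (signVec y v ^ 2 + 1)
        + 4 * a v ^ 3 * rademacherSum a s y * signVec y v
        + 6 * a v ^ 2 * rademacherSum a s y ^ 2) * signVec_sq y v
    simp only [hexp, sum_add_distrib, ← mul_sum, sum_signVec_mul_rademacherSum_pow hv,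
      sum_rademacherSum_sq, sum_const, card_univ, Fintype.card_fun, Fintype.card_bool,
      sum_insert hv]
    simp only [nsmul_eq_mul, Nat.cast_pow, Nat.cast_ofNat, mul_zero, add_zero]
    nlinarith [ih, mul_nonneg (pow_nonneg zero_le_two (Fintype.card ι))
      (pow_nonneg (sq_nonneg (a v)) 2)]

theorem khintchine (a : ι → ℝ) :
    2 ^ Fintype.card ι * √(∑ v, a v ^ 2) ≤ √3 * ∑ y, |rademacherSum a univ y| := by
  set N := (2 : ℝ) ^ Fintype.card ι
  set q := ∑ v, a v ^ 2
  set S := ∑ y, |rademacherSum a univ y|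
  have hq : 0 ≤ q := sum_nonneg fun v _ => sq_nonneg _
  have hholder := sum_sq_pow_three_le univ (f := fun y => |rademacherSum a univ y|)
    fun y _ => abs_nonneg _
  simp only [sq_abs, (by decide : Even 4).pow_abs, sum_rademacherSum_sq] at hholder
  have h4 := sum_rademacherSum_pow_four_le a univ
  have key : N ^ 2 * q ≤ 3 * S ^ 2 := by
    rcases hq.eq_or_lt with h0 | hpos
    · rw [← h0, mul_zero]; positivity
    refine le_of_mul_le_mul_right ?_ (by positivity : 0 < N * q ^ 2)
    nlinarith [mul_le_mul_of_nonneg_left h4 (sq_nonneg S)]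
  rw [← pow_le_pow_iff_left₀ (by positivity) (by positivity) two_ne_zero, mul_pow, mul_pow,
    Real.sq_sqrt hq, Real.sq_sqrt zero_le_three]
  linarith

end Khintchine

section CrossMatrix

variable {ι : Type*} [Fintype ι] [DecidableEq ι] {M : Matrix ι ι ℝ} {L : Finset ι}

lemma piecewise_neg_dotProduct_mulVec (hM : ∀ i j, (i ∈ L ↔ j ∈ L) → M i j = 0) (x : ι → ℝ) :
    L.piecewise x (-x) ⬝ᵥ (M *ᵥ L.piecewise x (-x)) = -(x ⬝ᵥ (M *ᵥ x)) := by
  simp only [dotProduct, mulVec, Finset.mul_sum, ← Finset.sum_neg_distrib]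
  refine Finset.sum_congr rfl fun i _ => Finset.sum_congr rfl fun j _ => ?_
  by_cases hi : i ∈ L <;> by_cases hj : j ∈ L <;>
    simp [hi, hj, hM i j, Finset.piecewise]

lemma mulVec_piecewise_apply (hM : ∀ i j, (i ∈ L ↔ j ∈ L) → M i j = 0) {u : ι} (hu : u ∈ L)
    (s y : ι → ℝ) : (M *ᵥ L.piecewise s y) u = (M *ᵥ y) u := by
  simp only [mulVec, dotProduct]
  refine Finset.sum_congr rfl fun j _ => ?_
  by_cases hj : j ∈ L <;> simp [hj, hM u j, hu]

lemma dotProduct_mulVec_eq_two_mul_sum (hMs : M.IsSymm)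
    (hM : ∀ i j, (i ∈ L ↔ j ∈ L) → M i j = 0) (x : ι → ℝ) :
    x ⬝ᵥ (M *ᵥ x) = 2 * ∑ u ∈ L, x u * (M *ᵥ x) u := by
  set F : ι → ι → ℝ := fun i j => if i ∈ L then x i * (M i j * x j) else 0
  have hsplit : ∀ i j, x i * (M i j * x j) = F i j + F j i := by
    intro i j
    by_cases hi : i ∈ L <;> by_cases hj : j ∈ L <;> simp [F, hi, hj, hMs.apply i j]
    all_goals first | simp [hM i j (by simp [hi, hj])] | ring
  have hswap : ∑ i, ∑ j, F j i = ∑ i, ∑ j, F i j := Finset.sum_comm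
  calc x ⬝ᵥ (M *ᵥ x) = ∑ i, ∑ j, F i j + ∑ i, ∑ j, F j i := by
        simp only [dotProduct, mulVec, Finset.mul_sum, hsplit, Finset.sum_add_distrib]
    _ = 2 * ∑ u ∈ L, x u * (M *ᵥ x) u := by
        rw [hswap, ← two_mul]
        simp [F, Finset.sum_ite_mem, mulVec, dotProduct, Finset.mul_sum]

end CrossMatrix

section Counting

lemma card_filter_powerset_card_le {α : Type*} (P : Finset α) (K : ℕ) :
    #{A ∈ P.powerset | #A ≤ K} ≤ (#P + 1) ^ K := by
  classical
  have hsub : {A ∈ P.powerset | #A ≤ K} ⊆ (range (K + 1)).biUnion (P.powersetCard ·) :=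
    fun A hA => by
      rw [mem_filter, mem_powerset] at hA
      exact mem_biUnion.mpr ⟨#A, mem_range.mpr (Nat.lt_succ_of_le hA.2),
        mem_powersetCard.mpr ⟨hA.1, rfl⟩⟩
  calc #{A ∈ P.powerset | #A ≤ K}
      ≤ ∑ k ∈ range (K + 1), #(P.powersetCard k) := (card_le_card hsub).trans card_biUnion_le
    _ ≤ ∑ k ∈ range (K + 1), #P ^ k * K.choose k := sum_le_sum fun k hk => by
        rw [card_powersetCard]
        exact (Nat.choose_le_pow _ _).trans (Nat.le_mul_of_pos_right _
          (Nat.choose_pos (Nat.lt_succ_iff.mp (mem_range.mp hk))))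
    _ = (#P + 1) ^ K := by
        rw [add_pow]
        simp

lemma Set.ncard_le_of_injOn_finset {α β : Type*} [Fintype β] {S : Set α} {φ : α → Finset β}
    {K : ℕ} (hinj : S.InjOn φ) (hcard : ∀ a ∈ S, #(φ a) ≤ K) :
    S.ncard ≤ (Fintype.card β + 1) ^ K := by
  classical
  calc S.ncard ≤ (({A ∈ Finset.univ.powerset | #A ≤ K} : Finset (Finset β)) :
        Set (Finset β)).ncard :=
        Set.ncard_le_ncard_of_injOn φ (fun a ha => by simpa using hcard a ha) hinj
          (Finset.finite_toSet _)
    _ ≤ (Fintype.card β + 1) ^ K := by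
        rw [Set.ncard_coe_finset]
        exact card_filter_powerset_card_le Finset.univ K

lemma card_sym2_fin_add_one_le {n : ℕ} (hn : 2 ≤ n) :
    Fintype.card (Sym2 (Fin n)) + 1 ≤ n ^ 2 := by
  rw [Sym2.card, Fintype.card_fin, Nat.choose_two_right, Nat.add_sub_cancel]
  have : (n + 1) * n / 2 < n ^ 2 := (Nat.div_lt_iff_lt_mul two_pos).mpr (by nlinarith)
  omega

lemma pow_floor_le_two_rpow {m : ℕ} {K : ℝ} (hm : 1 ≤ m) (hK : 0 ≤ K) :
    ((m : ℝ) ^ ⌊K⌋₊) ≤ 2 ^ (K * Real.logb 2 m) := by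
  have hm' : (1 : ℝ) ≤ m := by exact_mod_cast hm
  rw [mul_comm, Real.rpow_mul zero_le_two,
    Real.rpow_logb zero_lt_two (by norm_num) (by linarith), ← Real.rpow_natCast]
  exact Real.rpow_le_rpow_of_exponent_le hm' (Nat.floor_le hK)

end Counting

namespace SimpleGraph

variable {V : Type*} {G H : SimpleGraph V}

lemma symmDiff_adj {u v : V} : (G ∆ H).Adj u v ↔ ¬(G.Adj u v ↔ H.Adj u v) := by
  rw [symmDiff_def, sup_adj, sdiff_adj, sdiff_adj]
  tauto

variable [Fintype V] [DecidableRel G.Adj] [DecidableRel H.Adj]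

lemma sum_sq_adjMatrix_sub_eq_degree_symmDiff [DecidableRel (G ∆ H).Adj] (u : V) :
    ∑ v, ((G.adjMatrix ℝ - H.adjMatrix ℝ) u v) ^ 2 = (G ∆ H).degree u := by
  rw [degree_eq_sum_if_adj]
  refine sum_congr rfl fun v _ => ?_
  by_cases hG : G.Adj u v <;> by_cases hH : H.Adj u v <;> simp [symmDiff_adj, hG, hH]

lemma sum_sq_adjMatrix_sub_le {d : ℕ} (hG : G.IsRegularOfDegree d) (hH : H.IsRegularOfDegree d)
    (u : V) : ∑ v, ((G.adjMatrix ℝ - H.adjMatrix ℝ) u v) ^ 2 ≤ 2 * d := by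
  calc ∑ v, ((G.adjMatrix ℝ - H.adjMatrix ℝ) u v) ^ 2
      ≤ ∑ v, ((if G.Adj u v then 1 else 0) + (if H.Adj u v then 1 else 0)) :=
        sum_le_sum fun v _ => by
          by_cases hG : G.Adj u v <;> by_cases hH : H.Adj u v <;> simp [hG, hH]
    _ = 2 * d := by
        rw [sum_add_distrib, ← degree_eq_sum_if_adj, ← degree_eq_sum_if_adj, hG u, hH u]
        ring

end SimpleGraph

section Laplacian

def IsCutSketch {n : ℕ} (f : (Fin n → ℝ) → ℝ) (ε : ℝ) (G : SimpleGraph (Fin n)) : Prop :=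
  ∀ x : Fin n → ℝ, (∀ i, x i = 1 ∨ x i = -1) →
    (1 - ε) * lapQuadForm G x ≤ f x ∧ f x ≤ (1 + ε) * lapQuadForm G x

variable {n d : ℕ} {G H : SimpleGraph (Fin n)} [DecidableRel G.Adj] [DecidableRel H.Adj]
  {L : Finset (Fin n)} {x : Fin n → ℝ}

lemma lapQuadForm_eq_sub_dotProduct_adjMatrix (hG : G.IsRegularOfDegree d)
    (hx : ∀ i, x i = 1 ∨ x i = -1) :
    lapQuadForm G x = d * n - x ⬝ᵥ (G.adjMatrix ℝ *ᵥ x) := by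
  have hxx : ∀ i, x i * x i = 1 := fun i => by
    rcases hx i with h | h <;> simp [h]
  unfold lapQuadForm
  rw [show Classical.decRel G.Adj = ‹_› from Subsingleton.elim _ _, lapMatrix, sub_mulVec,
    dotProduct_sub, dotProduct_mulVec_degMatrix]
  simp only [hG _, mul_assoc, hxx, mul_one, sum_const, card_univ, Fintype.card_fin, nsmul_eq_mul]
  ring

lemma adjMatrix_apply_eq_zero_of_isBipartiteWith (hG : IsBipartiteWith G (L : Set (Fin n)))
    {i j : Fin n} (hij : i ∈ L ↔ j ∈ L) : G.adjMatrix ℝ i j = 0 := by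
  have := hG i j
  simp only [Finset.mem_coe] at this
  rw [adjMatrix_apply, if_neg]
  tauto

lemma isBipartiteWith_symmDiff (hG : IsBipartiteWith G (L : Set (Fin n)))
    (hH : IsBipartiteWith H (L : Set (Fin n))) :
    (G ∆ H).IsBipartiteWith (L : Set (Fin n)) (Lᶜ : Finset (Fin n)) where
  disjoint := by simpa using disjoint_compl_right
  mem_of_adj u v huv := by
    have hGH : G.Adj u v ∨ H.Adj u v := by rw [symmDiff_adj] at huv; tauto
    have := hGH.elim (hG u v) (hH u v)
    simp only [Finset.coe_compl, Set.mem_compl_iff, Finset.mem_coe] at this ⊢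
    tauto

lemma piecewise_neg_eq_one_or_neg_one (hx : ∀ i, x i = 1 ∨ x i = -1) (i : Fin n) :
    L.piecewise x (-x) i = 1 ∨ L.piecewise x (-x) i = -1 := by
  by_cases hi : i ∈ L <;> rcases hx i with h | h <;> simp [hi, h]

lemma lapQuadForm_add_lapQuadForm_piecewise_neg (hG : G.IsRegularOfDegree d)
    (hGL : IsBipartiteWith G (L : Set (Fin n))) (hx : ∀ i, x i = 1 ∨ x i = -1) :
    lapQuadForm G x + lapQuadForm G (L.piecewise x (-x)) = 2 * d * n := by
  rw [lapQuadForm_eq_sub_dotProduct_adjMatrix hG hx,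
    lapQuadForm_eq_sub_dotProduct_adjMatrix hG (piecewise_neg_eq_one_or_neg_one hx),
    piecewise_neg_dotProduct_mulVec fun i j => adjMatrix_apply_eq_zero_of_isBipartiteWith hGL]
  ring

variable {f : (Fin n → ℝ) → ℝ} {ε : ℝ}

lemma abs_lapQuadForm_sub_le (hG : G.IsRegularOfDegree d) (hH : H.IsRegularOfDegree d)
    (hGL : IsBipartiteWith G (L : Set (Fin n))) (hHL : IsBipartiteWith H (L : Set (Fin n)))
    (hfG : IsCutSketch f ε G) (hfH : IsCutSketch f ε H)
    (hx : ∀ i, x i = 1 ∨ x i = -1) :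
    |lapQuadForm G x - lapQuadForm H x| ≤ 2 * ε * d * n := by
  have hx' := piecewise_neg_eq_one_or_neg_one (L := L) hx
  obtain ⟨hG₁, hG₂⟩ := hfG x hx
  obtain ⟨hH₁, hH₂⟩ := hfH x hx
  obtain ⟨hG₁', hG₂'⟩ := hfG _ hx'
  obtain ⟨hH₁', hH₂'⟩ := hfH _ hx'
  rw [eq_sub_of_add_eq' (lapQuadForm_add_lapQuadForm_piecewise_neg hG hGL hx)] at hG₁' hG₂'
  rw [eq_sub_of_add_eq' (lapQuadForm_add_lapQuadForm_piecewise_neg hH hHL hx)] at hH₁' hH₂'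
  rw [abs_le]
  constructor <;> linarith

lemma sum_abs_adjMatrix_sub_mulVec_le (hG : G.IsRegularOfDegree d)
    (hH : H.IsRegularOfDegree d)
    (hGL : IsBipartiteWith G (L : Set (Fin n))) (hHL : IsBipartiteWith H (L : Set (Fin n)))
    (hfG : IsCutSketch f ε G) (hfH : IsCutSketch f ε H)
    {y : Fin n → ℝ} (hy : ∀ i, y i = 1 ∨ y i = -1) :
    ∑ u ∈ L, |((G.adjMatrix ℝ - H.adjMatrix ℝ) *ᵥ y) u| ≤ ε * d * n := by
  set B := G.adjMatrix ℝ - H.adjMatrix ℝ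
  have hB : ∀ i j, (i ∈ L ↔ j ∈ L) → B i j = 0 := fun i j hij => by
    rw [show B i j = G.adjMatrix ℝ i j - H.adjMatrix ℝ i j from rfl,
      adjMatrix_apply_eq_zero_of_isBipartiteWith hGL hij,
      adjMatrix_apply_eq_zero_of_isBipartiteWith hHL hij, sub_zero]
  set x := L.piecewise (fun u => if 0 ≤ (B *ᵥ y) u then 1 else -1) y
  have hx : ∀ i, x i = 1 ∨ x i = -1 := fun i => by
    by_cases hi : i ∈ L
    · simp only [x, piecewise_eq_of_mem _ _ _ hi]; split_ifs <;> simp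
    · simpa [x, hi] using hy i
  have hxB : x ⬝ᵥ (B *ᵥ x) = 2 * ∑ u ∈ L, |(B *ᵥ y) u| := by
    rw [dotProduct_mulVec_eq_two_mul_sum ((isSymm_adjMatrix G).sub (isSymm_adjMatrix H)) hB]
    congr 1
    refine sum_congr rfl fun u hu => ?_
    rw [mulVec_piecewise_apply hB hu]
    simp only [x, piecewise_eq_of_mem _ _ _ hu]
    split_ifs with h
    · rw [one_mul, abs_of_nonneg h]
    · rw [abs_of_neg (not_le.mp h)]; ring
  have hQ : lapQuadForm G x - lapQuadForm H x = -(x ⬝ᵥ (B *ᵥ x)) := by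
    rw [lapQuadForm_eq_sub_dotProduct_adjMatrix hG hx,
      lapQuadForm_eq_sub_dotProduct_adjMatrix hH hx, sub_mulVec, dotProduct_sub]
    ring
  have := abs_lapQuadForm_sub_le hG hH hGL hHL hfG hfH hx
  rw [hQ, abs_neg, hxB, abs_of_nonneg (by positivity)] at this
  linarith

theorem card_edgeFinset_symmDiff_le [DecidableRel (G ∆ H).Adj] (hG : G.IsRegularOfDegree d)
    (hH : H.IsRegularOfDegree d)
    (hGL : IsBipartiteWith G (L : Set (Fin n))) (hHL : IsBipartiteWith H (L : Set (Fin n)))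
    (hfG : IsCutSketch f ε G) (hfH : IsCutSketch f ε H) :
    (#(G ∆ H).edgeFinset : ℝ) ≤ √6 * ε * (d : ℝ) ^ ((3 : ℝ) / 2) * n := by
  set B := G.adjMatrix ℝ - H.adjMatrix ℝ
  have hcut (y : Fin n → Bool) : ∑ u ∈ L, |rademacherSum (B u) univ y| ≤ ε * d * n :=
    sum_abs_adjMatrix_sub_mulVec_le hG hH hGL hHL hfG hfH (signVec_eq_one_or_neg_one y)
  have hrow (u : Fin n) :
      2 ^ n * ∑ v, B u v ^ 2 ≤ √(6 * d) * ∑ y, |rademacherSum (B u) univ y| := by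
    have hk := khintchine (B u)
    rw [Fintype.card_fin] at hk
    have hq0 : 0 ≤ ∑ v, B u v ^ 2 := sum_nonneg fun v _ => sq_nonneg _
    calc 2 ^ n * ∑ v, B u v ^ 2 = 2 ^ n * √(∑ v, B u v ^ 2) * √(∑ v, B u v ^ 2) := by
          rw [mul_assoc, Real.mul_self_sqrt hq0]
      _ ≤ (√3 * ∑ y, |rademacherSum (B u) univ y|) * √(2 * d) :=
          mul_le_mul hk (Real.sqrt_le_sqrt (sum_sq_adjMatrix_sub_le hG hH u))
            (Real.sqrt_nonneg _) (by positivity)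
      _ = √(6 * d) * ∑ y, |rademacherSum (B u) univ y| := by
          rw [show (6 : ℝ) * d = 3 * (2 * d) by ring, Real.sqrt_mul zero_le_three]
          ring
  have hedges : (#(G ∆ H).edgeFinset : ℝ) = ∑ u ∈ L, ∑ v, B u v ^ 2 := by
    rw [← isBipartiteWith_sum_degrees_eq_card_edges (isBipartiteWith_symmDiff hGL hHL)]
    push_cast
    exact sum_congr rfl fun u _ => (sum_sq_adjMatrix_sub_eq_degree_symmDiff u).symm
  have hE : (#(G ∆ H).edgeFinset : ℝ) ≤ ε * d * n * √(6 * d) := by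
    refine le_of_mul_le_mul_left ?_ (by positivity : (0 : ℝ) < 2 ^ n)
    calc 2 ^ n * (#(G ∆ H).edgeFinset : ℝ) = ∑ u ∈ L, 2 ^ n * ∑ v, B u v ^ 2 := by
          rw [hedges, mul_sum]
      _ ≤ ∑ u ∈ L, √(6 * d) * ∑ y, |rademacherSum (B u) univ y| := sum_le_sum fun u _ => hrow u
      _ = √(6 * d) * ∑ y, ∑ u ∈ L, |rademacherSum (B u) univ y| := by rw [← mul_sum, sum_comm]
      _ ≤ √(6 * d) * ∑ _y : Fin n → Bool, ε * d * n := by gcongr with y; exact hcut y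
      _ = 2 ^ n * (ε * d * n * √(6 * d)) := by
          simp only [sum_const, card_univ, Fintype.card_pi, Fintype.card_bool, prod_const,
            Fintype.card_fin, nsmul_eq_mul, Nat.cast_pow, Nat.cast_ofNat]
          ring
  have hd : (d : ℝ) ^ ((3 : ℝ) / 2) = d * √d := by
    rw [show (3 : ℝ) / 2 = 1 + 1 / 2 by norm_num, Real.rpow_add' (Nat.cast_nonneg d) (by norm_num),
      Real.rpow_one, Real.sqrt_eq_rpow]
  calc (#(G ∆ H).edgeFinset : ℝ) ≤ ε * d * n * √(6 * d) := hE
    _ = √6 * ε * (d : ℝ) ^ ((3 : ℝ) / 2) * n := by rw [hd, Real.sqrt_mul (by norm_num)]; ring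

lemma ncard_isCutSketch_le (hn : 2 ≤ n) :
    {G : SimpleGraph (Fin n) | IsRegOfDeg G d ∧ IsBipartiteWith G (L : Set (Fin n)) ∧
      IsCutSketch f ε G}.ncard ≤ (n ^ 2) ^ ⌊√6 * ε * (d : ℝ) ^ ((3 : ℝ) / 2) * n⌋₊ := by
  classical
  obtain hS | ⟨G₀, hG₀, hG₀L, hG₀f⟩ := Set.eq_empty_or_nonempty
    {G : SimpleGraph (Fin n) | IsRegOfDeg G d ∧ IsBipartiteWith G (L : Set (Fin n)) ∧
      IsCutSketch f ε G}
  · simp [hS]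
  exact (Set.ncard_le_of_injOn_finset (φ := fun H => (G₀ ∆ H).edgeFinset)
    (fun H₁ _ H₂ _ h => symmDiff_right_injective G₀ (edgeFinset_inj.mp h))
    fun _ hH => Nat.le_floor (card_edgeFinset_symmDiff_le hG₀ hH.1 hG₀L hH.2.1 hG₀f hH.2.2)).trans
    (Nat.pow_le_pow_left (card_sym2_fin_add_one_le hn) _)

end Laplacian

theorem cut_sketch_count_general (n d : ℕ) (hn : 2 ≤ n)
    (ε : ℝ) (hε : 0 < ε)
    (L : Finset (Fin n))
    (f : (Fin n → ℝ) → ℝ) :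
    ((Set.ncard {G : SimpleGraph (Fin n) | IsRegOfDeg G d ∧
        IsBipartiteWith G (↑L : Set (Fin n)) ∧
        ∀ x : Fin n → ℝ, (∀ i, x i = 1 ∨ x i = -1) →
          (1 - ε) * lapQuadForm G x ≤ f x ∧ f x ≤ (1 + ε) * lapQuadForm G x}) : ℝ) ≤
      2 ^ ((d : ℝ) * n / 2 + 9 * (d : ℝ) ^ ((3 : ℝ) / 2) * ε * n * Real.logb 2 n) := by
  set K := √6 * ε * (d : ℝ) ^ ((3 : ℝ) / 2) * n with hKdef
  have hexp : K * Real.logb 2 ((n ^ 2 : ℕ) : ℝ) ≤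
      d * n / 2 + 9 * (d : ℝ) ^ ((3 : ℝ) / 2) * ε * n * Real.logb 2 n := by
    have hlog : 0 ≤ Real.logb 2 n :=
      Real.logb_nonneg one_lt_two (by exact_mod_cast (by omega : 1 ≤ n))
    have hsqrt6 : √6 ≤ 3 := Real.sqrt_le_iff.mpr ⟨by norm_num, by norm_num⟩
    have hP : 0 ≤ ε * (d : ℝ) ^ ((3 : ℝ) / 2) * n * Real.logb 2 n := by positivity
    have hdn : 0 ≤ (d : ℝ) * n / 2 := by positivity
    rw [Nat.cast_pow, Real.logb_pow, hKdef]
    nlinarith [mul_le_mul_of_nonneg_right hsqrt6 hP]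
  calc _ ≤ (((n ^ 2) ^ ⌊K⌋₊ : ℕ) : ℝ) := Nat.cast_le.mpr (ncard_isCutSketch_le hn)
    _ ≤ 2 ^ (K * Real.logb 2 ((n ^ 2 : ℕ) : ℝ)) := by
        rw [Nat.cast_pow]
        exact pow_floor_le_two_rpow (Nat.one_le_pow _ _ (by omega)) (by positivity)
    _ ≤ _ := Real.rpow_le_rpow_of_exponent_le one_le_two hexp

/-- Any fixed function `f : {-1,1}ⁿ → ℝ` is an `ε`-cut sketch of at most
`2^(dn/2 + 9d^(3/2)εn log₂ n)` simple `d`-regular bipartite graphs on `n` labelled vertices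
with a fixed balanced bipartition. -/
theorem cut_sketch_count (n d : ℕ) (hn : 2 ≤ n) (hneven : Even n) (hd : 1 ≤ d)
    (ε : ℝ) (hε : 0 < ε) (hε' : ε ≤ 1 / 3)
    (L : Finset (Fin n)) (hL : L.card = n / 2)
    (f : (Fin n → ℝ) → ℝ) :
    ((Set.ncard {G : SimpleGraph (Fin n) | IsRegOfDeg G d ∧
        IsBipartiteWith G (↑L : Set (Fin n)) ∧
        ∀ x : Fin n → ℝ, (∀ i, x i = 1 ∨ x i = -1) →
          (1 - ε) * lapQuadForm G x ≤ f x ∧ f x ≤ (1 + ε) * lapQuadForm G x}) : ℝ) ≤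
      2 ^ ((d : ℝ) * n / 2 + 9 * (d : ℝ) ^ ((3 : ℝ) / 2) * ε * n * Real.logb 2 n) :=
  cut_sketch_count_general n d hn ε hε L f
end
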